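/- arXiv:1308.6086 — 2 statements merged into one kernel-verified Lean document; each statement's English description precedes it below -/
import Mathlib

section
/- Under the assumptions that f is lower bounded, ∇f is L_f-Lipschitz, L > L_f, and Σ_{k≥0}‖ε^k‖² < ∞, the inexact IHT iterates x^{k+1} = H_K(x^k - (1/L)(∇f(x^k)+ε^k)) satisfy lim_{k→∞} ‖x^k - x^{k+1}‖ = 0. -/
/-!
Since `x^k` is itself `K`-sparse, the hard-thresholded point `x^{k+1}` is at least as close as
`x^k` to the gradient step `x^k - (∇f(x^k) + ε^k)/L`; expanding the squares gives
`⟪x^{k+1} - x^k, ∇f(x^k) + ε^k⟫ ≤ -(L/2)‖x^{k+1} - x^k‖²`. Together with the descent lemma for the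
`L_f`-smooth `f` and Young's inequality on the error term this yields the sufficient decrease
`(L - L_f)/4 ‖x^{k+1} - x^k‖² ≤ f(x^k) - f(x^{k+1}) + ‖ε^k‖²/(L - L_f)`.
Summing, the `f`-terms telescope and are bounded since `f` is bounded below, and the errors are
square-summable, so `∑ ‖x^{k+1} - x^k‖² < ∞`.
-/

noncomputable section

/-- A vector is `K`-sparse if it has at most `K` nonzero entries. -/
def sparse {N : ℕ} (K : ℕ) (x : EuclideanSpace ℝ (Fin N)) : Prop :=
  (Finset.univ.filter fun i => x i ≠ 0).card ≤ K

/-- `IsHT K z x` means `x` is a result of hard thresholding `z`: a `K`-sparse vector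
closest to `z` (ties broken arbitrarily). -/
def IsHT {N : ℕ} (K : ℕ) (z x : EuclideanSpace ℝ (Fin N)) : Prop :=
  sparse K x ∧ ∀ v : EuclideanSpace ℝ (Fin N), sparse K v → ‖x - z‖ ≤ ‖v - z‖

open scoped RealInnerProductSpace

theorem summable_of_le_sub_succ_add {a u e : ℕ → ℝ} (ha : ∀ k, 0 ≤ a k)
    (hu : BddBelow (Set.range u)) (he : Summable e) (he0 : ∀ k, 0 ≤ e k)
    (h : ∀ k, a k ≤ u k - u (k + 1) + e k) : Summable a := by
  obtain ⟨B, hB⟩ := hu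
  refine summable_of_sum_range_le ha (c := u 0 - B + ∑' k, e k) fun n => ?_
  calc ∑ k ∈ Finset.range n, a k
      ≤ ∑ k ∈ Finset.range n, (u k - u (k + 1) + e k) := Finset.sum_le_sum fun k _ => h k
    _ = u 0 - u n + ∑ k ∈ Finset.range n, e k := by
      rw [Finset.sum_add_distrib, Finset.sum_range_sub']
    _ ≤ u 0 - B + ∑' k, e k := by
      gcongr
      · exact hB (Set.mem_range_self n)
      · exact he.sum_le_tsum _ fun k _ => he0 k

theorem nonneg_of_norm_sub_le_mul_norm_sub {X F : Type*} [NormedAddCommGroup X] [Nontrivial X]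
    [SeminormedAddCommGroup F] {g : X → F} {C : ℝ} (h : ∀ x y, ‖g x - g y‖ ≤ C * ‖x - y‖) :
    0 ≤ C := by
  obtain ⟨x, y, hxy⟩ := exists_pair_ne X
  exact nonneg_of_mul_nonneg_left ((norm_nonneg _).trans (h x y))
    (norm_pos_iff.2 (sub_ne_zero.2 hxy))

section InnerProductSpace

variable {E : Type*} [NormedAddCommGroup E] [InnerProductSpace ℝ E]

theorem inner_sub_le_neg_half_mul_norm_sq_of_norm_sub_le {x y g : E} {L : ℝ} (hL : 0 < L)
    (h : ‖y - (x - (1 / L) • g)‖ ≤ ‖x - (x - (1 / L) • g)‖) :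
    ⟪y - x, g⟫ ≤ -(L / 2) * ‖y - x‖ ^ 2 := by
  rw [sub_sub_cancel, sub_sub_eq_add_sub, add_sub_right_comm] at h
  have hsq := pow_le_pow_left₀ (norm_nonneg _) h 2
  rw [norm_add_sq_real, real_inner_smul_right] at hsq
  have key : ‖y - x‖ ^ 2 + 2 * (1 / L * ⟪y - x, g⟫) ≤ 0 := by linarith
  field_simp at key
  linarith

variable [CompleteSpace E]

theorem le_add_inner_gradient_add_half_mul_norm_sq {f : E → ℝ} {Lf : ℝ}
    (hf : Differentiable ℝ f)
    (hlip : ∀ x y, ‖gradient f x - gradient f y‖ ≤ Lf * ‖x - y‖) (a b : E) :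
    f b ≤ f a + ⟪gradient f a, b - a⟫ + Lf / 2 * ‖b - a‖ ^ 2 := by
  set d := b - a
  -- `f` along the segment minus its quadratic model is antitone on `[0, 1]`.
  let φ : ℝ → ℝ := fun t => f (a + t • d) - t * ⟪gradient f a, d⟫ - Lf / 2 * t ^ 2 * ‖d‖ ^ 2
  let φ' : ℝ → ℝ := fun t =>
    ⟪gradient f (a + t • d), d⟫ - ⟪gradient f a, d⟫ - Lf * t * ‖d‖ ^ 2
  have hφ : ∀ t, HasDerivAt φ (φ' t) t := by
    intro t
    have hline : HasDerivAt (fun s : ℝ => a + s • d) d t := by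
      simpa using ((hasDerivAt_id t).smul_const d).const_add a
    have hfline : HasDerivAt (fun s : ℝ => f (a + s • d)) ⟪gradient f (a + t • d), d⟫ t :=
      (hf _).hasGradientAt.hasFDerivAt.comp_hasDerivAt t hline
    refine ((hfline.sub ((hasDerivAt_id' t).mul_const ⟪gradient f a, d⟫)).sub
      (((hasDerivAt_pow 2 t).const_mul (Lf / 2)).mul_const (‖d‖ ^ 2))).congr_deriv ?_
    simp only [φ']
    ring
  have hφ'_nonpos : ∀ t ∈ interior (Set.Icc (0 : ℝ) 1), φ' t ≤ 0 := by
    intro t ht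
    rw [interior_Icc] at ht
    have : ⟪gradient f (a + t • d) - gradient f a, d⟫ ≤ Lf * t * ‖d‖ ^ 2 :=
      calc ⟪gradient f (a + t • d) - gradient f a, d⟫
          ≤ ‖gradient f (a + t • d) - gradient f a‖ * ‖d‖ := real_inner_le_norm _ _
        _ ≤ Lf * ‖a + t • d - a‖ * ‖d‖ := by gcongr; exact hlip _ _
        _ = Lf * t * ‖d‖ ^ 2 := by
          rw [add_sub_cancel_left, norm_smul, Real.norm_of_nonneg ht.1.le]; ring
    simp only [φ', ← inner_sub_left]
    linarith
  have hanti : AntitoneOn φ (Set.Icc 0 1) :=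
    antitoneOn_of_hasDerivWithinAt_nonpos (convex_Icc 0 1)
      (fun t _ => (hφ t).continuousAt.continuousWithinAt)
      (fun t _ => (hφ t).hasDerivWithinAt) hφ'_nonpos
  have h01 :=
    hanti (Set.left_mem_Icc.2 zero_le_one) (Set.right_mem_Icc.2 zero_le_one) zero_le_one
  simp only [φ, one_smul, zero_smul, add_zero, d, add_sub_cancel] at h01
  linarith

theorem sufficient_decrease_of_inexact_step {f : E → ℝ} {Lf L : ℝ} (hf : Differentiable ℝ f)
    (hlip : ∀ x y, ‖gradient f x - gradient f y‖ ≤ Lf * ‖x - y‖) (hL0 : 0 < L) (hL : Lf < L)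
    {x y e : E} (hy : ‖y - (x - (1 / L) • (gradient f x + e))‖ ≤
      ‖x - (x - (1 / L) • (gradient f x + e))‖) :
    (L - Lf) / 4 * ‖y - x‖ ^ 2 ≤ f x - f y + ‖e‖ ^ 2 / (L - Lf) := by
  have hdescent := le_add_inner_gradient_add_half_mul_norm_sq hf hlip x y
  have hstep := inner_sub_le_neg_half_mul_norm_sq_of_norm_sub_le hL0 hy
  rw [inner_add_right, real_inner_comm] at hstep
  have hcs : -⟪y - x, e⟫ ≤ ‖y - x‖ * ‖e‖ := by
    rw [← inner_neg_left, neg_sub, norm_sub_rev]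
    exact real_inner_le_norm _ _
  have hyoung : ‖y - x‖ * ‖e‖ ≤ (L - Lf) / 4 * ‖y - x‖ ^ 2 + ‖e‖ ^ 2 / (L - Lf) := by
    have hδ : 0 < L - Lf := sub_pos.2 hL
    refine le_of_mul_le_mul_left ?_ hδ
    have hexpand : (L - Lf) * ((L - Lf) / 4 * ‖y - x‖ ^ 2 + ‖e‖ ^ 2 / (L - Lf)) =
        ((L - Lf) * ‖y - x‖) ^ 2 / 4 + ‖e‖ ^ 2 := by
      field_simp
    rw [hexpand]
    nlinarith [sq_nonneg ((L - Lf) * ‖y - x‖ - 2 * ‖e‖)]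
  linarith

theorem tendsto_norm_sub_succ_of_inexact_gradient_steps {f : E → ℝ} {Lf L : ℝ}
    (hf : Differentiable ℝ f) (hbelow : BddBelow (Set.range f))
    (hlip : ∀ x y, ‖gradient f x - gradient f y‖ ≤ Lf * ‖x - y‖) (hL0 : 0 < L) (hL : Lf < L)
    {x ε : ℕ → E}
    (hstep : ∀ k, ‖x (k + 1) - (x k - (1 / L) • (gradient f (x k) + ε k))‖ ≤
      ‖x k - (x k - (1 / L) • (gradient f (x k) + ε k))‖)
    (hsum : Summable fun k => ‖ε k‖ ^ 2) :
    Filter.Tendsto (fun k => ‖x k - x (k + 1)‖) Filter.atTop (nhds 0) := by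
  have hδ : 0 < L - Lf := sub_pos.2 hL
  have hsummable : Summable fun k => (L - Lf) / 4 * ‖x (k + 1) - x k‖ ^ 2 :=
    summable_of_le_sub_succ_add (fun k => by positivity)
      (hbelow.mono (Set.range_comp_subset_range x f)) (hsum.div_const _) (fun k => by positivity)
      fun k => sufficient_decrease_of_inexact_step hf hlip hL0 hL (hstep k)
  have hsq := ((summable_mul_left_iff (by positivity)).1 hsummable).tendsto_atTop_zero.sqrt
  simpa [Real.sqrt_sq (norm_nonneg _), norm_sub_rev] using hsq

end InnerProductSpace

/-- Vanishing successive differences for inexact IHT: if `f` is lower bounded, `∇f` is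
`L_f`-Lipschitz, `L > L_f`, and the errors are square-summable, then
`‖x^k - x^{k+1}‖ → 0`. -/
theorem stmt5 {N : ℕ} (K : ℕ) (f : EuclideanSpace ℝ (Fin N) → ℝ) (Lf L : ℝ)
    (hf : ContDiff ℝ 1 f)
    (hbelow : ∃ B, ∀ y, B ≤ f y)
    (hlip : ∀ x y, ‖gradient f x - gradient f y‖ ≤ Lf * ‖x - y‖)
    (hL : Lf < L)
    (x ε : ℕ → EuclideanSpace ℝ (Fin N))
    (h0 : sparse K (x 0))
    (hit : ∀ k, IsHT K (x k - (1 / L) • (gradient f (x k) + ε k)) (x (k + 1)))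
    (hsum : Summable fun k => ‖ε k‖ ^ 2) :
    Filter.Tendsto (fun k => ‖x k - x (k + 1)‖) Filter.atTop (nhds 0) := by
  rcases subsingleton_or_nontrivial (EuclideanSpace ℝ (Fin N)) with hE | hE
  · have hzero : ∀ k, x k - x (k + 1) = 0 := fun k => Subsingleton.elim _ _
    simp only [hzero, norm_zero]
    exact tendsto_const_nhds
  have hL0 : 0 < L := (nonneg_of_norm_sub_le_mul_norm_sub hlip).trans_lt hL
  have hsparse : ∀ k, sparse K (x k)
    | 0 => h0
    | k + 1 => (hit k).1
  obtain ⟨B, hB⟩ := hbelow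
  exact tendsto_norm_sub_succ_of_inexact_gradient_steps (hf.differentiable one_ne_zero)
    ⟨B, by rintro _ ⟨y, rfl⟩; exact hB y⟩ hlip hL0 hL (fun k => (hit k).2 (x k) (hsparse k)) hsum
end
end

section
/- Let f be lower bounded with L_f-Lipschitz gradient and let {x^k} be generated by inexact IHT with L > L_f starting from a K-sparse x^0, with errors satisfying Σ_{k≥0}‖ε^k‖² < ∞. Then any accumulation point x* of {x^k} is an L-stationary point, i.e., x* = H_K(x* - (1/L)∇f(x*)). -/
/-!
Comparing the thresholded point `x^{k+1}` with the sparse competitor `x^k`, the descent lemma and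
Young's inequality give
`f(x^{k+1}) + (L - L_f)/4 ‖x^{k+1} - x^k‖² ≤ f(x^k) + ‖ε^k‖² / (L - L_f)`.
Telescoping against the lower bound of `f` makes `‖x^{k+1} - x^k‖²` summable. Hence along a
subsequence with `x^k → x*` also `x^{k+1} → x*`, while the thresholding targets tend to
`x* - ∇f(x*)/L`; the graph of hard thresholding is closed, so `x*` thresholds that point.
-/

noncomputable section

open Filter Topology InnerProductSpace

section InnerProduct

variable {E : Type*} [SeminormedAddCommGroup E] [InnerProductSpace ℝ E]

lemma real_inner_le_young {u v : E} {c : ℝ} (hc : 0 < c) :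
    ⟪u, v⟫_ℝ ≤ c / 2 * ‖u‖ ^ 2 + 1 / (2 * c) * ‖v‖ ^ 2 := by
  have hsq : c / 2 * ‖u‖ ^ 2 + 1 / (2 * c) * ‖v‖ ^ 2 - ‖u‖ * ‖v‖
      = (c * ‖u‖ - ‖v‖) ^ 2 / (2 * c) := by
    field_simp; ring
  have : ‖u‖ * ‖v‖ ≤ c / 2 * ‖u‖ ^ 2 + 1 / (2 * c) * ‖v‖ ^ 2 := by
    rw [← sub_nonneg, hsq]; positivity
  exact (real_inner_le_norm u v).trans this

lemma two_mul_inner_le_neg_norm_sq_of_norm_add_le {d w : E} (h : ‖d + w‖ ≤ ‖w‖) :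
    2 * ⟪d, w⟫_ℝ ≤ -‖d‖ ^ 2 := by
  have := pow_le_pow_left₀ (norm_nonneg _) h 2
  rw [norm_add_sq_real] at this
  linarith

end InnerProduct

section Descent

variable {E : Type*} [NormedAddCommGroup E] [InnerProductSpace ℝ E] [CompleteSpace E]
  {f : E → ℝ} {Lf : ℝ}

lemma ContDiff.continuous_gradient {n : WithTop ℕ∞} (hf : ContDiff ℝ n f) (hn : n ≠ 0) :
    Continuous (gradient f) := by
  show Continuous fun x => (toDual ℝ E).symm (fderiv ℝ f x)
  exact (toDual ℝ E).symm.continuous.comp (hf.continuous_fderiv hn)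

lemma descent_lemma (hf : Differentiable ℝ f)
    (hlip : ∀ x y, ‖gradient f x - gradient f y‖ ≤ Lf * ‖x - y‖) (a b : E) :
    f b ≤ f a + ⟪gradient f a, b - a⟫_ℝ + Lf / 2 * ‖b - a‖ ^ 2 := by
  set d := b - a
  -- The gap between `f` and its quadratic upper model along the ray `a + t • d` is antitone.
  let g : ℝ → ℝ := fun t => f (a + t • d) - t * ⟪gradient f a, d⟫_ℝ - Lf / 2 * t ^ 2 * ‖d‖ ^ 2
  have hg : ∀ t, HasDerivAt g
      (⟪gradient f (a + t • d), d⟫_ℝ - ⟪gradient f a, d⟫_ℝ - Lf * t * ‖d‖ ^ 2) t := by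
    intro t
    have hline : HasDerivAt (fun t : ℝ => a + t • d) d t := by
      simpa using ((hasDerivAt_id t).smul_const d).const_add a
    have hcomp := (hf (a + t • d)).hasFDerivAt.comp_hasDerivAt t hline
    rw [← inner_gradient_left] at hcomp
    refine ((hcomp.sub ((hasDerivAt_id t).mul_const ⟪gradient f a, d⟫_ℝ)).sub
      (((hasDerivAt_pow 2 t).const_mul (Lf / 2)).mul_const (‖d‖ ^ 2))).congr_deriv ?_
    simp only [one_mul, Nat.cast_ofNat]
    ring
  have hanti : AntitoneOn g (Set.Ici 0) := by
    refine antitoneOn_of_hasDerivWithinAt_nonpos (convex_Ici 0)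
      (fun t _ => (hg t).continuousAt.continuousWithinAt) (fun t _ => (hg t).hasDerivWithinAt) ?_
    intro t ht
    rw [interior_Ici] at ht
    have hgrad : ‖gradient f (a + t • d) - gradient f a‖ ≤ Lf * (t * ‖d‖) := by
      simpa [norm_smul, abs_of_pos (Set.mem_Ioi.mp ht)] using hlip (a + t • d) a
    calc ⟪gradient f (a + t • d), d⟫_ℝ - ⟪gradient f a, d⟫_ℝ - Lf * t * ‖d‖ ^ 2
        = ⟪gradient f (a + t • d) - gradient f a, d⟫_ℝ - Lf * t * ‖d‖ ^ 2 := by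
          rw [inner_sub_left]
      _ ≤ ‖gradient f (a + t • d) - gradient f a‖ * ‖d‖ - Lf * t * ‖d‖ ^ 2 := by
          gcongr; exact real_inner_le_norm _ _
      _ ≤ Lf * (t * ‖d‖) * ‖d‖ - Lf * t * ‖d‖ ^ 2 := by gcongr
      _ = 0 := by ring
  have := hanti Set.self_mem_Ici (Set.mem_Ici.2 zero_le_one) zero_le_one
  simp only [g, one_smul, zero_smul, add_zero, one_pow, zero_mul, mul_one, sub_zero,
    zero_pow two_ne_zero, mul_zero, add_sub_cancel, d] at this
  linarith

-- `hstep` holds when `y'` hard-thresholds the step's target and `y` is itself sparse.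
lemma sufficient_decrease (hf : Differentiable ℝ f)
    (hlip : ∀ x y, ‖gradient f x - gradient f y‖ ≤ Lf * ‖x - y‖) {L : ℝ} (hL : Lf < L)
    {y y' e : E} (hstep : ‖y' - (y - (1 / L) • (gradient f y + e))‖
      ≤ ‖y - (y - (1 / L) • (gradient f y + e))‖) :
    f y' + (L - Lf) / 4 * ‖y' - y‖ ^ 2 ≤ f y + 1 / (L - Lf) * ‖e‖ ^ 2 := by
  rcases eq_or_ne y' y with rfl | hne
  · simp only [sub_self, norm_zero]
    have : 0 ≤ 1 / (L - Lf) * ‖e‖ ^ 2 := by have := sub_pos.2 hL; positivity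
    linarith
  have hLf : 0 ≤ Lf := nonneg_of_mul_nonneg_left ((norm_nonneg _).trans (hlip y' y))
    (norm_pos_iff.2 (sub_ne_zero.2 hne))
  have hL0 : 0 < L := hLf.trans_lt hL
  have hinner : ⟪y' - y, gradient f y + e⟫_ℝ ≤ -(L / 2) * ‖y' - y‖ ^ 2 := by
    rw [sub_sub_cancel, sub_sub_eq_add_sub, add_sub_right_comm] at hstep
    have h := two_mul_inner_le_neg_norm_sq_of_norm_add_le hstep
    rw [real_inner_smul_right] at h
    calc ⟪y' - y, gradient f y + e⟫_ℝ = L / 2 * (2 * (1 / L * ⟪y' - y, gradient f y + e⟫_ℝ)) := by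
          field_simp
      _ ≤ L / 2 * -‖y' - y‖ ^ 2 := by gcongr
      _ = -(L / 2) * ‖y' - y‖ ^ 2 := by ring
  have hyoung := real_inner_le_young (u := y' - y) (v := -e) (c := (L - Lf) / 2) (by linarith)
  rw [inner_neg_right, norm_neg, show 1 / (2 * ((L - Lf) / 2)) = 1 / (L - Lf) by ring] at hyoung
  have hdesc := descent_lemma hf hlip y y'
  rw [real_inner_comm] at hdesc
  rw [inner_add_right] at hinner
  linarith

end Descent

lemma summable_of_le_sub_succ_add_s7 {u d b : ℕ → ℝ} (hu : BddBelow (Set.range u))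
    (hd : ∀ k, 0 ≤ d k) (hb : Summable b) (hb0 : ∀ k, 0 ≤ b k)
    (h : ∀ k, d k ≤ u k - u (k + 1) + b k) : Summable d := by
  obtain ⟨B, hB⟩ := hu
  refine summable_of_sum_range_le (c := u 0 - B + ∑' k, b k) hd fun n => ?_
  calc ∑ k ∈ Finset.range n, d k
      ≤ ∑ k ∈ Finset.range n, (u k - u (k + 1) + b k) := Finset.sum_le_sum fun k _ => h k
    _ = u 0 - u n + ∑ k ∈ Finset.range n, b k := by
      rw [Finset.sum_add_distrib, Finset.sum_range_sub']
    _ ≤ u 0 - B + ∑' k, b k := by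
      gcongr
      · exact hB ⟨n, rfl⟩
      · exact hb.sum_le_tsum _ fun k _ => hb0 k

lemma tendsto_zero_of_summable_norm_sq {E : Type*} [SeminormedAddCommGroup E] {u : ℕ → E}
    (h : Summable fun k => ‖u k‖ ^ 2) : Tendsto u atTop (𝓝 0) := by
  rw [tendsto_zero_iff_norm_tendsto_zero]
  simpa [Real.sqrt_sq (norm_nonneg _)] using h.tendsto_atTop_zero.sqrt

section Sparse

variable {N : ℕ} {K : ℕ}

lemma isClosed_setOf_sparse : IsClosed {x : EuclideanSpace ℝ (Fin N) | sparse K x} := by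
  refine isOpen_compl_iff.1 (isOpen_iff_mem_nhds.2 fun x hx => ?_)
  have hsupp : ∀ᶠ y in 𝓝 x, ∀ i ∈ Finset.univ.filter (fun i => x i ≠ 0), y i ≠ 0 :=
    (eventually_all_finset _).2 fun i hi =>
      ((PiLp.continuous_apply 2 _ i).tendsto x).eventually_ne (Finset.mem_filter.1 hi).2
  filter_upwards [hsupp] with y hy hsp
  exact hx <| (Finset.card_le_card fun i hi =>
    Finset.mem_filter.2 ⟨Finset.mem_univ _, hy i hi⟩).trans hsp

lemma isClosed_setOf_isHT :
    IsClosed {p : EuclideanSpace ℝ (Fin N) × EuclideanSpace ℝ (Fin N) | IsHT K p.1 p.2} := by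
  have : {p : EuclideanSpace ℝ (Fin N) × EuclideanSpace ℝ (Fin N) | IsHT K p.1 p.2} =
      {p | sparse K p.2} ∩ ⋂ v ∈ {v | sparse K v}, {p | ‖p.2 - p.1‖ ≤ ‖v - p.1‖} := by
    ext p; simp [IsHT]
  rw [this]
  exact (isClosed_setOf_sparse.preimage continuous_snd).inter <| isClosed_biInter fun v _ =>
    isClosed_le (continuous_snd.sub continuous_fst).norm (continuous_const.sub continuous_fst).norm

end Sparse

/-- Any accumulation point of inexact IHT (with `f` lower bounded, `∇f` `L_f`-Lipschitz,
`L > L_f`, square-summable errors) is an `L`-stationary point: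
`x* = H_K(x* - (1/L)∇f(x*))`. -/
theorem stmt7 {N : ℕ} (K : ℕ) (f : EuclideanSpace ℝ (Fin N) → ℝ) (Lf L : ℝ)
    (hf : ContDiff ℝ 1 f)
    (hbelow : ∃ B, ∀ y, B ≤ f y)
    (hlip : ∀ x y, ‖gradient f x - gradient f y‖ ≤ Lf * ‖x - y‖)
    (hL : Lf < L)
    (x ε : ℕ → EuclideanSpace ℝ (Fin N))
    (h0 : sparse K (x 0))
    (hit : ∀ k, IsHT K (x k - (1 / L) • (gradient f (x k) + ε k)) (x (k + 1)))
    (hsum : Summable fun k => ‖ε k‖ ^ 2)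
    (xstar : EuclideanSpace ℝ (Fin N))
    (hacc : MapClusterPt xstar Filter.atTop x) :
    IsHT K (xstar - (1 / L) • gradient f xstar) xstar := by
  have hsparse : ∀ k, sparse K (x k)
    | 0 => h0
    | k + 1 => (hit k).1
  have hdecrease (k : ℕ) : (L - Lf) / 4 * ‖x (k + 1) - x k‖ ^ 2
      ≤ f (x k) - f (x (k + 1)) + 1 / (L - Lf) * ‖ε k‖ ^ 2 := by
    have := sufficient_decrease (hf.differentiable one_ne_zero) hlip hL
      ((hit k).2 (x k) (hsparse k))
    linarith
  have hsteps : Summable fun k => ‖x (k + 1) - x k‖ ^ 2 := by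
    have hgap : 0 < L - Lf := sub_pos.2 hL
    obtain ⟨B, hB⟩ := hbelow
    refine (summable_mul_left_iff (by positivity : (L - Lf) / 4 ≠ 0)).1 ?_
    exact summable_of_le_sub_succ_add_s7 ⟨B, Set.forall_mem_range.2 fun k => hB _⟩
      (fun k => by positivity) (hsum.mul_left _) (fun k => by positivity) hdecrease
  obtain ⟨φ, hφ, hxφ⟩ := hacc.tendsto_subseq
  have hxφ' : Tendsto (fun k => x (φ k + 1)) atTop (𝓝 xstar) := by
    simpa using ((tendsto_zero_of_summable_norm_sq hsteps).comp hφ.tendsto_atTop).add hxφ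
  have hεφ : Tendsto (fun k => ε (φ k)) atTop (𝓝 0) :=
    (tendsto_zero_of_summable_norm_sq hsum).comp hφ.tendsto_atTop
  have htarget : Tendsto (fun k => x (φ k) - (1 / L) • (gradient f (x (φ k)) + ε (φ k))) atTop
      (𝓝 (xstar - (1 / L) • gradient f xstar)) := by
    simpa using hxφ.sub (((((hf.continuous_gradient one_ne_zero).tendsto xstar).comp hxφ).add
      hεφ).const_smul (1 / L))
  exact isClosed_setOf_isHT.mem_of_tendsto (htarget.prodMk_nhds hxφ')
    (Eventually.of_forall fun k => hit (φ k))
end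
end
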